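/- If c = d/2 for some odd integer d ≥ 3, then there exists a nonzero finite-dimensional module over the spherical algebra A_{−c} = e H_{−c} e. -/

import Mathlib

/-!
STATEMENT 17. Let `W = {1,s}` act on `ℂ[x]` by `s x = -x`.  For `c ∈ ℂ` the Dunkl
operator is `T_c = d/dx - (c/x)(1-s)`, an endomorphism of `ℂ[x,x⁻¹]`; the type `A₁`
rational Cherednik algebra `H_c` is the subalgebra of `End_ℂ (ℂ[x,x⁻¹])` generated by
multiplication by `x`, the action of `s` and `T_c`, and its spherical subalgebra is
`A_c = e H_c e` where `e = (1+s)/2`.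

Theorem: if `c = d/2` for an odd integer `d ≥ 3`, then there exists a nonzero
finite-dimensional module over the spherical algebra `A_{-c} = e H_{-c} e`.
-/

noncomputable section
open LaurentPolynomial

/-- The Laurent polynomial ring `ℂ[x,x⁻¹]`. -/
abbrev LaurentC := LaurentPolynomial ℂ

/-- Multiplication operator by a Laurent polynomial. -/
def mulOpL (r : LaurentC) : Module.End ℂ LaurentC := LinearMap.mulLeft ℂ r

/-- Multiplication by `x`. -/
def Xop : Module.End ℂ LaurentC := mulOpL (T 1)

/-- The action of the reflection `s : x ↦ -x` on `ℂ[x,x⁻¹]`: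
`x^n ↦ (-1)^n x^n`. -/
def Sop : Module.End ℂ LaurentC :=
  (AddMonoidAlgebra.coeffLinearEquiv ℂ).symm.toLinearMap ∘ₗ
  Finsupp.lsum ℂ (fun n : ℤ => (((-1 : ℂ) ^ n)) • Finsupp.lsingle n) ∘ₗ
  (AddMonoidAlgebra.coeffLinearEquiv ℂ).toLinearMap

/-- The derivative `d/dx` on `ℂ[x,x⁻¹]`: `x^n ↦ n x^(n-1)`. -/
def Dx : Module.End ℂ LaurentC :=
  (AddMonoidAlgebra.coeffLinearEquiv ℂ).symm.toLinearMap ∘ₗ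
  Finsupp.lsum ℂ (fun n : ℤ => ((n : ℂ)) • Finsupp.lsingle (n - 1)) ∘ₗ
  (AddMonoidAlgebra.coeffLinearEquiv ℂ).toLinearMap

/-- The Dunkl operator `T_c = d/dx - (c/x)(1 - s)` of type `A₁`. -/
def DunklA1 (c : ℂ) : Module.End ℂ LaurentC :=
  Dx - c • (mulOpL (T (-1)) * (1 - Sop))

/-- The rational Cherednik algebra `H_c` of type `A₁`, realised (via the Dunkl
embedding) as the subalgebra of `End_ℂ (ℂ[x,x⁻¹])` generated by multiplication by
`x`, the action of `s`, and the Dunkl operator `T_c`. -/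
def HcA1 (c : ℂ) : Subalgebra ℂ (Module.End ℂ LaurentC) :=
  Algebra.adjoin ℂ {Xop, Sop, DunklA1 c}

/-- The trivial (symmetrising) idempotent `e = (1+s)/2`. -/
def eop : Module.End ℂ LaurentC := (2⁻¹ : ℂ) • (1 + Sop)

/-- The spherical subalgebra `A_c = e H_c e`, as a subset of `End_ℂ (ℂ[x,x⁻¹])`. -/
def sphericalA1 (c : ℂ) : Set (Module.End ℂ LaurentC) :=
  {D | ∃ P ∈ HcA1 c, D = eop * P * eop}

/-!
If `N + c (1 - (-1)^N) = 0`, i.e. `T_{-c} x^N = 0`, then the Laurent polynomials supported in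
degrees `≥ N` form a subspace stable under `x`, `s` and `T_{-c}`, hence under `H_{-c}`. This holds
for `N = 0` and, since `c = d/2` with `d` odd, for `N = -d`. So `H_{-c}` acts on the subquotient
spanned by `x⁻¹, …, x⁻ᵈ`, and `e H_{-c} e` acts on its even part, spanned by `x⁻², …, x⁻²ᵏ`
(`d = 2k + 1`, so `k ≥ 1`), with `e` acting as the identity. Concretely, the representation is the
compression `D ↦ π ∘ D ∘ ι` to these monomials.
-/

namespace Submodule

variable {R M : Type*} [CommSemiring R] [AddCommMonoid M] [Module R M]

def endStabilizer (p : Submodule R M) : Subalgebra R (Module.End R M) where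
  carrier := {f | p ≤ p.comap f}
  mul_mem' hf hg _ hx := hf (hg hx)
  add_mem' hf hg _ hx := p.add_mem (hf hx) (hg hx)
  algebraMap_mem' r _ hx := p.smul_mem r hx

lemma mem_endStabilizer {p : Submodule R M} {f : Module.End R M} :
    f ∈ p.endStabilizer ↔ ∀ x ∈ p, f x ∈ p := Iff.rfl

end Submodule

namespace LinearMap

section

variable {R U V : Type*} [CommSemiring R] [AddCommMonoid U] [AddCommMonoid V]
  [Module R U] [Module R V]

def compress (ι : U →ₗ[R] V) (π : V →ₗ[R] U) : Module.End R V →ₗ[R] Module.End R U where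
  toFun D := π ∘ₗ D ∘ₗ ι
  map_add' _ _ := by ext; simp
  map_smul' _ _ := by ext; simp

lemma compress_apply (ι : U →ₗ[R] V) (π : V →ₗ[R] U) (D : Module.End R V) (u : U) :
    compress ι π D u = π (D (ι u)) := rfl

end

variable {R U V : Type*} [CommRing R] [AddCommGroup U] [AddCommGroup V]
  [Module R U] [Module R V]

lemma compress_mul (ι : U →ₗ[R] V) (π : V →ₗ[R] U) (p : Submodule R V)
    {D D' : Module.End R V} (hD : ∀ x ∈ p, π (D x) = 0)
    (hD' : ∀ u, D' (ι u) - ι (π (D' (ι u))) ∈ p) :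
    compress ι π (D * D') = compress ι π D * compress ι π D' := by
  ext u
  have hsplit : D' (ι u) = ι (π (D' (ι u))) + (D' (ι u) - ι (π (D' (ι u)))) := by abel
  simp only [compress_apply, Module.End.mul_apply]
  rw [hsplit, map_add, map_add, hD _ (hD' u), add_zero, ← hsplit]

end LinearMap

lemma coeff_mulOpL_T (n : ℤ) (f : LaurentC) (m : ℤ) :
    (mulOpL (T n) f).coeff m = f.coeff (m - n) := by
  rw [mulOpL, LinearMap.mulLeft_apply, T, AddMonoidAlgebra.coeff_single_mul_apply, one_mul,
    neg_add_eq_sub]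

lemma coeff_Sop (f : LaurentC) (m : ℤ) : (Sop f).coeff m = (-1 : ℂ) ^ m * f.coeff m := by
  simp +contextual [Sop, Finsupp.sum_apply, Finsupp.single_apply]

lemma coeff_Dx (f : LaurentC) (m : ℤ) : (Dx f).coeff m = ((m : ℂ) + 1) * f.coeff (m + 1) := by
  simp +contextual [Dx, Finsupp.sum_apply, Finsupp.single_apply, sub_eq_iff_eq_add]

lemma coeff_DunklA1_neg (c : ℂ) (f : LaurentC) (m : ℤ) :
    (DunklA1 (-c) f).coeff m = ((m : ℂ) + 1 + c * (1 - (-1 : ℂ) ^ (m + 1))) * f.coeff (m + 1) := by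
  simp only [DunklA1, LinearMap.sub_apply, LinearMap.smul_apply, Module.End.mul_apply,
    Module.End.one_apply, AddMonoidAlgebra.coeff_sub,
    AddMonoidAlgebra.coeff_smul_apply, Finsupp.sub_apply, coeff_Dx, coeff_mulOpL_T, coeff_Sop,
    sub_neg_eq_add, smul_eq_mul]
  ring

lemma coeff_eop (f : LaurentC) (m : ℤ) :
    (eop f).coeff m = (2⁻¹ : ℂ) * (1 + (-1 : ℂ) ^ m) * f.coeff m := by
  simp only [eop, LinearMap.smul_apply, LinearMap.add_apply, Module.End.one_apply,
    AddMonoidAlgebra.coeff_smul_apply, AddMonoidAlgebra.coeff_add, Finsupp.add_apply, coeff_Sop,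
    smul_eq_mul]
  ring

lemma coeff_eop_of_even {m : ℤ} (hm : Even m) (f : LaurentC) : (eop f).coeff m = f.coeff m := by
  rw [coeff_eop, hm.neg_one_zpow]; ring

lemma coeff_eop_of_odd {m : ℤ} (hm : Odd m) (f : LaurentC) : (eop f).coeff m = 0 := by
  rw [coeff_eop, hm.neg_one_zpow]; ring

def laurentGE (N : ℤ) : Submodule ℂ LaurentC := AddMonoidAlgebra.supported ℂ ℂ (Set.Ici N)

lemma mem_laurentGE {N : ℤ} {f : LaurentC} : f ∈ laurentGE N ↔ ∀ m < N, f.coeff m = 0 := by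
  simp [laurentGE, AddMonoidAlgebra.mem_supported']

lemma Xop_mem_endStabilizer (N : ℤ) : Xop ∈ (laurentGE N).endStabilizer := by
  simp only [Submodule.mem_endStabilizer, mem_laurentGE, Xop, coeff_mulOpL_T]
  exact fun f hf m hm => hf _ (by omega)

lemma Sop_mem_endStabilizer (N : ℤ) : Sop ∈ (laurentGE N).endStabilizer := by
  simp only [Submodule.mem_endStabilizer, mem_laurentGE, coeff_Sop]
  intro f hf m hm
  rw [hf m hm, mul_zero]

lemma eop_mem_endStabilizer (N : ℤ) : eop ∈ (laurentGE N).endStabilizer :=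
  Subalgebra.smul_mem _ (add_mem (one_mem _) (Sop_mem_endStabilizer N)) _

/-- `T_{-c}` lowers degrees by one and kills `x^N`, so it cannot move anything below degree `N`. -/
lemma DunklA1_neg_mem_endStabilizer {c : ℂ} {N : ℤ} (hN : (N : ℂ) + c * (1 - (-1 : ℂ) ^ N) = 0) :
    DunklA1 (-c) ∈ (laurentGE N).endStabilizer := by
  simp only [Submodule.mem_endStabilizer, mem_laurentGE, coeff_DunklA1_neg]
  intro f hf m hm
  rcases lt_or_eq_of_le (show m + 1 ≤ N by omega) with hlt | rfl
  · rw [hf _ hlt, mul_zero]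
  · have hx : (m : ℂ) + 1 + c * (1 - (-1 : ℂ) ^ (m + 1)) = 0 := by exact_mod_cast hN
    rw [hx, zero_mul]

lemma HcA1_neg_le_endStabilizer {c : ℂ} {N : ℤ} (hN : (N : ℂ) + c * (1 - (-1 : ℂ) ^ N) = 0) :
    HcA1 (-c) ≤ (laurentGE N).endStabilizer := by
  refine Algebra.adjoin_le ?_
  rintro D (rfl | rfl | rfl)
  exacts [Xop_mem_endStabilizer N, Sop_mem_endStabilizer N, DunklA1_neg_mem_endStabilizer hN]

lemma sphericalA1_neg_subset_endStabilizer {c : ℂ} {N : ℤ}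
    (hN : (N : ℂ) + c * (1 - (-1 : ℂ) ^ N) = 0) :
    sphericalA1 (-c) ⊆ (laurentGE N).endStabilizer := by
  rintro _ ⟨P, hP, rfl⟩
  exact mul_mem (mul_mem (eop_mem_endStabilizer N) (HcA1_neg_le_endStabilizer hN hP))
    (eop_mem_endStabilizer N)

def evenNegExponent (k : ℕ) (i : Fin k) : ℤ := -2 * ((i : ℤ) + 1)

lemma evenNegExponent_injective (k : ℕ) : Function.Injective (evenNegExponent k) := by
  intro i j h
  simp only [evenNegExponent] at h
  exact Fin.ext (by omega)

lemma mem_range_evenNegExponent {k : ℕ} {m : ℤ} :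
    m ∈ Set.range (evenNegExponent k) ↔ Even m ∧ -2 * (k : ℤ) ≤ m ∧ m < 0 := by
  constructor
  · rintro ⟨i, rfl⟩
    refine ⟨⟨-((i : ℤ) + 1), by rw [evenNegExponent]; ring⟩, ?_, ?_⟩ <;>
      simp only [evenNegExponent] <;> omega
  · rintro ⟨⟨t, rfl⟩, hlow, hneg⟩
    exact ⟨⟨(-t - 1).toNat, by omega⟩, by simp only [evenNegExponent]; omega⟩

def monomialSpan {ι : Type*} [Fintype ι] (a : ι → ℤ) : (ι → ℂ) →ₗ[ℂ] LaurentC :=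
  Fintype.linearCombination ℂ fun i => T (a i)

def monomialCoeffs {ι : Type*} (a : ι → ℤ) : LaurentC →ₗ[ℂ] (ι → ℂ) :=
  LinearMap.pi fun i => Finsupp.lapply (a i) ∘ₗ (AddMonoidAlgebra.coeffLinearEquiv ℂ).toLinearMap

lemma monomialCoeffs_apply {ι : Type*} (a : ι → ℤ) (f : LaurentC) (i : ι) :
    monomialCoeffs a f i = f.coeff (a i) := rfl

lemma coeff_monomialSpan {ι : Type*} [Fintype ι] (a : ι → ℤ) (v : ι → ℂ) (m : ℤ) :
    (monomialSpan a v).coeff m = ∑ i, if a i = m then v i else 0 := by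
  rw [monomialSpan, Fintype.linearCombination_apply, AddMonoidAlgebra.coeff_sum,
    Finsupp.finsetSum_apply]
  simp only [AddMonoidAlgebra.coeff_smul_apply, T, AddMonoidAlgebra.coeff_single,
    Finsupp.single_apply, smul_eq_mul, mul_ite, mul_one, mul_zero]

lemma coeff_monomialSpan_self {ι : Type*} [Fintype ι] {a : ι → ℤ} (ha : Function.Injective a)
    (v : ι → ℂ) (i : ι) : (monomialSpan a v).coeff (a i) = v i := by
  rw [coeff_monomialSpan, Fintype.sum_eq_single i fun j hj => if_neg (ha.ne hj), if_pos rfl]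

lemma coeff_monomialSpan_of_notMem_range {ι : Type*} [Fintype ι] {a : ι → ℤ} {m : ℤ}
    (hm : m ∉ Set.range a) (v : ι → ℂ) : (monomialSpan a v).coeff m = 0 :=
  (coeff_monomialSpan a v m).trans <| Finset.sum_eq_zero fun i _ => if_neg fun h => hm ⟨i, h⟩

lemma monomialSpan_mem_laurentGE {ι : Type*} [Fintype ι] {a : ι → ℤ} {N : ℤ}
    (ha : ∀ i, N ≤ a i) (v : ι → ℂ) : monomialSpan a v ∈ laurentGE N :=
  mem_laurentGE.2 fun _ hm => coeff_monomialSpan_of_notMem_range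
    (by rintro ⟨i, rfl⟩; exact (ha i).not_gt hm) v

lemma monomialCoeffs_eq_zero_of_mem_laurentGE {ι : Type*} {a : ι → ℤ} {N : ℤ}
    (ha : ∀ i, a i < N) {f : LaurentC} (hf : f ∈ laurentGE N) : monomialCoeffs a f = 0 :=
  funext fun i => mem_laurentGE.1 hf _ (ha i)

def compressEvenNeg (k : ℕ) : Module.End ℂ LaurentC →ₗ[ℂ] Module.End ℂ (Fin k → ℂ) :=
  LinearMap.compress (monomialSpan (evenNegExponent k)) (monomialCoeffs (evenNegExponent k))

lemma compressEvenNeg_eop (k : ℕ) : compressEvenNeg k eop = 1 := by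
  refine LinearMap.ext fun v => funext fun i => ?_
  have heven : Even (evenNegExponent k i) := (mem_range_evenNegExponent.1 ⟨i, rfl⟩).1
  rw [compressEvenNeg, LinearMap.compress_apply, monomialCoeffs_apply, coeff_eop_of_even heven,
    coeff_monomialSpan_self (evenNegExponent_injective k)]
  rfl

/-- The odd coefficients of `eop f` vanish, and so do those below `-(2k+1)`; the remaining
negative degrees are exactly `-2, …, -2k`. -/
lemma eop_sub_monomialSpan_mem_laurentGE_zero {k : ℕ} {f : LaurentC}
    (hf : f ∈ laurentGE (-(2 * k + 1))) :
    eop f - monomialSpan (evenNegExponent k) (monomialCoeffs (evenNegExponent k) (eop f)) ∈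
      laurentGE 0 := by
  refine mem_laurentGE.2 fun m hm => ?_
  rw [AddMonoidAlgebra.coeff_sub, Finsupp.sub_apply]
  by_cases hmr : m ∈ Set.range (evenNegExponent k)
  · obtain ⟨i, rfl⟩ := hmr
    rw [coeff_monomialSpan_self (evenNegExponent_injective k), monomialCoeffs_apply, sub_self]
  rw [coeff_monomialSpan_of_notMem_range hmr, sub_zero]
  rcases Int.even_or_odd m with heven | hodd
  · rw [coeff_eop_of_even heven]
    refine mem_laurentGE.1 hf m (not_le.1 fun hle => hmr (mem_range_evenNegExponent.2 ?_))
    obtain ⟨t, rfl⟩ := heven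
    exact ⟨⟨t, rfl⟩, by omega, hm⟩
  · exact coeff_eop_of_odd hodd f

lemma compressEvenNeg_mul {k : ℕ} {c : ℂ} (hc : c = (2 * k + 1) / 2)
    {D D' : Module.End ℂ LaurentC} (hD : D ∈ sphericalA1 (-c)) (hD' : D' ∈ sphericalA1 (-c)) :
    compressEvenNeg k (D * D') = compressEvenNeg k D * compressEvenNeg k D' := by
  have hodd_exp : Odd (-(2 * (k : ℤ) + 1)) := ⟨-k - 1, by ring⟩
  have hlow : HcA1 (-c) ≤ (laurentGE (-(2 * k + 1))).endStabilizer :=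
    HcA1_neg_le_endStabilizer (by rw [hodd_exp.neg_one_zpow, hc]; push_cast; ring)
  have hzero : sphericalA1 (-c) ⊆ (laurentGE 0).endStabilizer :=
    sphericalA1_neg_subset_endStabilizer (by simp)
  refine LinearMap.compress_mul _ _ (laurentGE 0) (fun f hf =>
    monomialCoeffs_eq_zero_of_mem_laurentGE (fun i => (mem_range_evenNegExponent.1 ⟨i, rfl⟩).2.2)
      (Submodule.mem_endStabilizer.1 (hzero hD) f hf)) fun v => ?_
  obtain ⟨P', hP', rfl⟩ := hD'
  have hv : monomialSpan (evenNegExponent k) v ∈ laurentGE (-(2 * k + 1)) :=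
    monomialSpan_mem_laurentGE (fun i => by
      have := (mem_range_evenNegExponent.1 ⟨i, rfl⟩).2.1; omega) v
  exact eop_sub_monomialSpan_mem_laurentGE_zero <|
    Submodule.mem_endStabilizer.1 (mul_mem (hlow hP') (eop_mem_endStabilizer _)) _ hv

/-- If `c = d/2` with `d ≥ 3` an odd integer, then there is a
nonzero finite-dimensional module over the spherical algebra `A_{-c} = e H_{-c} e`:
i.e. there are `n > 0` and a `ℂ`-linear representation `ρ` of `A_{-c}` on `ℂⁿ`
which is multiplicative on `A_{-c}` and sends the identity element `e` of `A_{-c}`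
to the identity. -/
theorem exists_nonzero_finite_dim_module_of_spherical_neg
    (d : ℤ) (hodd : Odd d) (hd : 3 ≤ d) (c : ℂ) (hc : c = (d : ℂ) / 2) :
    ∃ n : ℕ, 0 < n ∧
      ∃ ρ : Module.End ℂ LaurentC →ₗ[ℂ] Module.End ℂ (Fin n → ℂ),
        ρ eop = 1 ∧
        (∀ D ∈ sphericalA1 (-c), ∀ D' ∈ sphericalA1 (-c), ρ (D * D') = ρ D * ρ D') := by
  obtain ⟨k, rfl⟩ := hodd
  lift k to ℕ using (by omega)
  refine ⟨k, by omega, compressEvenNeg k, compressEvenNeg_eop k,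
    fun D hD D' hD' => compressEvenNeg_mul ?_ hD hD'⟩
  rw [hc]; push_cast; ring

end
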